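/- arXiv:2110.11863 — 2 statements merged into one kernel-verified Lean document; each statement's English description precedes it below -/
import Mathlib

section
/- Let Θ ∈ H^∞(𝕋, B(E)) be a two-sided inner function and let Δ ∈ H^∞(𝕋, B(E)) be a left inner divisor of Θ. Then Δ is an inner divisor of Θ (i.e. both a left and a right inner divisor of Θ) if and only if the function z ↦ Θ(z)Δ(z)* belongs to H^∞(𝕋, B(E)). -/
/-! If `Θ = ΔA` with `Θ(z)` co-isometric, then `A(z)Θ(z)*` is a right inverse of the isometry
`Δ(z)`, so `Δ` is two-sided inner. For such `Δ`, a factorization `Θ = BΔ` forces `B = ΘΔ*`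
a.e., while conversely `Θ = (ΘΔ*)Δ` always holds. -/

open MeasureTheory Complex

noncomputable section

/-- Normalized arc-length (Haar) measure on the unit circle `𝕋`, realized as a
measure on `ℂ` supported on the unit circle. -/
def mT : Measure ℂ :=
  Measure.map (fun t : ℝ => Complex.exp (t * Complex.I))
    ((ENNReal.ofReal (2 * Real.pi))⁻¹ • volume.restrict (Set.Ioc 0 (2 * Real.pi)))

variable {D E E' : Type*}
  [NormedAddCommGroup D] [InnerProductSpace ℂ D] [CompleteSpace D]
  [NormedAddCommGroup E] [InnerProductSpace ℂ E] [CompleteSpace E]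
  [NormedAddCommGroup E'] [InnerProductSpace ℂ E'] [CompleteSpace E']

/-- The `n`-th Fourier coefficient `Φ̂(n)x = ∫_𝕋 z̄ⁿ Φ(z)x dm(z)` of an
operator-valued function, applied to the vector `x`. -/
def fc (Φ : ℂ → D →L[ℂ] E) (n : ℤ) (x : D) : E :=
  ∫ z, ((starRingEnd ℂ) z) ^ n • (Φ z x) ∂mT

/-- Membership in `H^∞(𝕋, B(D,E))`: SOT-measurable, essentially bounded in operator
norm, with vanishing negative Fourier coefficients. -/
structure MemHinf (Φ : ℂ → D →L[ℂ] E) : Prop where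
  meas : ∀ x : D, AEStronglyMeasurable (fun z => Φ z x) mT
  bdd : ∃ r : ℝ, ∀ᵐ z ∂mT, ‖Φ z‖ ≤ r
  neg : ∀ n : ℤ, n < 0 → ∀ x : D, fc Φ n x = 0

/-- An inner function: `Φ ∈ H^∞` with `Φ(z)*Φ(z) = I` a.e. -/
def IsInnerFn (Φ : ℂ → D →L[ℂ] E) : Prop :=
  MemHinf Φ ∧ ∀ᵐ z ∂mT,
    (ContinuousLinearMap.adjoint (Φ z)).comp (Φ z) = ContinuousLinearMap.id ℂ D

/-- A two-sided inner function: inner and `Φ(z)Φ(z)* = I` a.e. -/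
def IsTwoSidedInner (Φ : ℂ → D →L[ℂ] E) : Prop :=
  IsInnerFn Φ ∧ ∀ᵐ z ∂mT,
    (Φ z).comp (ContinuousLinearMap.adjoint (Φ z)) = ContinuousLinearMap.id ℂ E

/-- `Θ` is a left inner divisor of `Φ`: `Θ` is inner and `Φ = Θ A` for some `A ∈ H^∞`. -/
def IsLeftInnerDiv (Θ : ℂ → E' →L[ℂ] E) (Φ : ℂ → D →L[ℂ] E) : Prop :=
  IsInnerFn Θ ∧ ∃ A : ℂ → D →L[ℂ] E', MemHinf A ∧ ∀ᵐ z ∂mT, Φ z = (Θ z).comp (A z)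

/-- `Ω` is a right inner divisor of `Φ`: `Ω` is inner and `Φ = B Ω` for some `B ∈ H^∞`. -/
def IsRightInnerDiv (Ω : ℂ → D →L[ℂ] E') (Φ : ℂ → D →L[ℂ] E) : Prop :=
  IsInnerFn Ω ∧ ∃ B : ℂ → E' →L[ℂ] E, MemHinf B ∧ ∀ᵐ z ∂mT, Φ z = (B z).comp (Ω z)

/-- `Δ` is an inner divisor of `Φ`: both a left and a right inner divisor. -/
def IsInnerDiv (Δ Φ : ℂ → E →L[ℂ] E) : Prop :=
  IsLeftInnerDiv Δ Φ ∧ IsRightInnerDiv Δ Φ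

/-- A unitary operator between Hilbert spaces. -/
def IsUnitaryOp (U : D →L[ℂ] E) : Prop :=
  (ContinuousLinearMap.adjoint U).comp U = ContinuousLinearMap.id ℂ D ∧
    U.comp (ContinuousLinearMap.adjoint U) = ContinuousLinearMap.id ℂ E

/-- An orthogonal projection: idempotent and self-adjoint. -/
def IsOrthoProj (P : E →L[ℂ] E) : Prop :=
  P.comp P = P ∧ ContinuousLinearMap.adjoint P = P

/-- A partial isometry: `T T* T = T`. -/
def IsPartialIsom (T : D →L[ℂ] E) : Prop :=
  (T.comp (ContinuousLinearMap.adjoint T)).comp T = T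

/-- The Blaschke factor `b_α(z) = (z - α)/(1 - ᾱ z)`. -/
def blaschke (α z : ℂ) : ℂ := (z - α) / (1 - (starRingEnd ℂ) α * z)

/-- The Poisson integral of `Φ ∈ H^∞` at `ζ ∈ 𝔻`, applied to the vector `x`:
`P[Φ](ζ)x = Σ_{n ≥ 0} Φ̂(n)x ζⁿ`. -/
def poissonFn (Φ : ℂ → D →L[ℂ] E) (ζ : ℂ) (x : D) : E :=
  ∑' n : ℕ, ζ ^ n • fc Φ (n : ℤ) x

/-- The `n`-th Fourier coefficient of a vector-valued function. -/
def vfc (f : ℂ → E) (n : ℤ) : E :=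
  ∫ z, ((starRingEnd ℂ) z) ^ n • f z ∂mT

/-- Membership in `H²(𝕋, E)`: square Bochner-integrable with vanishing
negative Fourier coefficients. -/
def MemH2 (f : ℂ → E) : Prop :=
  MemLp f 2 mT ∧ ∀ n : ℤ, n < 0 → vfc f n = 0

/-- A finite Blaschke product `θ = ∏ b_{αₙ}` with all `αₙ ∈ 𝔻`. -/
def IsFiniteBlaschkeProd (θ : ℂ → ℂ) : Prop :=
  ∃ (M : ℕ) (α : Fin M → ℂ), (∀ i, ‖α i‖ < 1) ∧ ∀ z, θ z = ∏ i, blaschke (α i) z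

/-- `Φ ∈ H^∞(𝕋, B(D,E))` is rational: `θ H²(𝕋,E) ⊆ ker H_{Φ*}` for some finite
Blaschke product `θ`, where `ker H_{Φ*} = {f ∈ H²(𝕋,E) : Φ*f ∈ H²(𝕋,D)}`. -/
def IsRationalFn (Φ : ℂ → D →L[ℂ] E) : Prop :=
  ∃ θ : ℂ → ℂ, IsFiniteBlaschkeProd θ ∧
    ∀ f : ℂ → E, MemH2 f →
      MemH2 (fun z => θ z • f z) ∧
      MemH2 (fun z => θ z • (ContinuousLinearMap.adjoint (Φ z)) (f z))

/-- A finite Blaschke-Potapov product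
`Δ = V ∏ₘ (b_{αₘ} Pₘ + (I - Pₘ))` with `V` a constant unitary, `αₘ ∈ 𝔻` and
`Pₘ` orthogonal projections. -/
def IsBPProduct (Δ : ℂ → E →L[ℂ] E) : Prop :=
  ∃ (M : ℕ) (V : E →L[ℂ] E) (α : Fin M → ℂ) (P : Fin M → E →L[ℂ] E),
    IsUnitaryOp V ∧ (∀ i, ‖α i‖ < 1) ∧ (∀ i, IsOrthoProj (P i)) ∧
    ∀ᵐ z ∂mT, Δ z = V * (List.ofFn fun i => blaschke (α i) z • P i + (1 - P i)).prod

/-- `Φ` and `Ψ` (with values in operators into the same space `E`) are left coprime: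
every common left inner divisor is a constant unitary. -/
def LeftCoprime {D₁ D₂ : Type*}
    [NormedAddCommGroup D₁] [InnerProductSpace ℂ D₁] [CompleteSpace D₁]
    [NormedAddCommGroup D₂] [InnerProductSpace ℂ D₂] [CompleteSpace D₂]
    (Φ : ℂ → D₁ →L[ℂ] E) (Ψ : ℂ → D₂ →L[ℂ] E) : Prop :=
  ∀ (F : Type) (_ : NormedAddCommGroup F) (_ : InnerProductSpace ℂ F) (_ : CompleteSpace F)
    (Θ : ℂ → F →L[ℂ] E), IsLeftInnerDiv Θ Φ → IsLeftInnerDiv Θ Ψ →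
      ∃ U : F →L[ℂ] E, IsUnitaryOp U ∧ ∀ᵐ z ∂mT, Θ z = U

open scoped InnerProduct

theorem MemHinf.congr_ae {X Y : Type*} [NormedAddCommGroup X] [InnerProductSpace ℂ X]
    [NormedAddCommGroup Y] [InnerProductSpace ℂ Y] {Φ Ψ : ℂ → X →L[ℂ] Y}
    (hΦ : MemHinf Φ) (h : ∀ᵐ z ∂mT, Φ z = Ψ z) : MemHinf Ψ where
  meas x := (hΦ.meas x).congr (h.mono fun z hz => by simp only [hz])
  bdd := by
    obtain ⟨r, hr⟩ := hΦ.bdd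
    exact ⟨r, (hr.and h).mono fun z hz => hz.2 ▸ hz.1⟩
  neg n hn x := by
    rw [← hΦ.neg n hn x]
    exact integral_congr_ae (h.mono fun z hz => by simp only [hz])

theorem ContinuousLinearMap.comp_adjoint_eq_id_of_comp_eq_id {V : E' →L[ℂ] E} {W : E →L[ℂ] E'}
    (hV : V† ∘L V = ContinuousLinearMap.id ℂ E') (hW : V ∘L W = ContinuousLinearMap.id ℂ E) :
    V ∘L V† = ContinuousLinearMap.id ℂ E :=
  calc V ∘L V† = V ∘L V† ∘L (V ∘L W) := by rw [hW, comp_id]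
    _ = V ∘L (V† ∘L V) ∘L W := by simp only [comp_assoc]
    _ = ContinuousLinearMap.id ℂ E := by rw [hV, id_comp, hW]

theorem IsLeftInnerDiv.isTwoSidedInner {Δ : ℂ → E' →L[ℂ] E} {Φ : ℂ → D →L[ℂ] E}
    (hΔ : IsLeftInnerDiv Δ Φ) (hΦ : ∀ᵐ z ∂mT, Φ z ∘L (Φ z)† = ContinuousLinearMap.id ℂ E) :
    IsTwoSidedInner Δ := by
  obtain ⟨hΔinner, A, -, hΦA⟩ := hΔ
  refine ⟨hΔinner, ?_⟩
  filter_upwards [hΔinner.2, hΦ, hΦA] with z hisom hcoisom hfactor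
  refine ContinuousLinearMap.comp_adjoint_eq_id_of_comp_eq_id (W := A z ∘L (Φ z)†) hisom ?_
  rw [← ContinuousLinearMap.comp_assoc, ← hfactor, hcoisom]

theorem isRightInnerDiv_iff_memHinf_comp_adjoint {X Y Z : Type*}
    [NormedAddCommGroup X] [InnerProductSpace ℂ X] [CompleteSpace X]
    [NormedAddCommGroup Y] [InnerProductSpace ℂ Y]
    [NormedAddCommGroup Z] [InnerProductSpace ℂ Z] [CompleteSpace Z]
    {Ω : ℂ → X →L[ℂ] Z} {Φ : ℂ → X →L[ℂ] Y}
    (hΩ : IsTwoSidedInner Ω) :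
    IsRightInnerDiv Ω Φ ↔ MemHinf fun z => Φ z ∘L (Ω z)† := by
  constructor
  · rintro ⟨-, B, hB, hΦB⟩
    refine hB.congr_ae ?_
    filter_upwards [hΩ.2, hΦB] with z hcoisom hfactor
    rw [hfactor, ContinuousLinearMap.comp_assoc, hcoisom, ContinuousLinearMap.comp_id]
  · intro hmem
    refine ⟨hΩ.1, _, hmem, ?_⟩
    filter_upwards [hΩ.1.2] with z hisom
    rw [ContinuousLinearMap.comp_assoc, hisom, ContinuousLinearMap.comp_id]

/-- Let `Θ ∈ H^∞(𝕋, B(E))` be two-sided inner and `Δ` a left inner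
divisor of `Θ`. Then `Δ` is an inner divisor of `Θ` (both a left and a right inner
divisor) iff `z ↦ Θ(z)Δ(z)*` belongs to `H^∞(𝕋, B(E))`. -/
theorem innerDiv_iff_theta_mul_adjoint_mem_Hinf (Θ Δ : ℂ → E →L[ℂ] E)
    (hΘ : IsTwoSidedInner Θ) (hΔ : IsLeftInnerDiv Δ Θ) :
    (IsLeftInnerDiv Δ Θ ∧ IsRightInnerDiv Δ Θ) ↔
      MemHinf (fun z => (Θ z).comp (ContinuousLinearMap.adjoint (Δ z))) :=
  (and_iff_right hΔ).trans (isRightInnerDiv_iff_memHinf_comp_adjoint (hΔ.isTwoSidedInner hΘ.2))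

end
end

section
/- Let E be a complex Hilbert space and let A(z) = Σ_{n=0}^{N} A_n z^n be an operator-valued polynomial with coefficients A_n ∈ B(E) such that A_n and A_n* are partial isometries for each n = 0, 1, …, N and E = ⊕_{n=0}^{N} ran A_n = ⊕_{n=0}^{N} ran A_n* (orthogonal direct sums). Then A(z) = V ∏_{m=1}^{N} (z P_m + (I_E − P_m)), where P_m is the orthogonal projection of E onto ⊕_{n=m}^{N} ran A_n* and V is the constant unitary operator acting as A_n on ran A_n* (n = 0, …, N); in particular A is a finite Blaschke-Potapov product and an inner divisor of z^N I_E. -/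
open MeasureTheory Complex

noncomputable section

variable {D E E' : Type*}
  [NormedAddCommGroup D] [InnerProductSpace ℂ D] [CompleteSpace D]
  [NormedAddCommGroup E] [InnerProductSpace ℂ E] [CompleteSpace E]
  [NormedAddCommGroup E'] [InnerProductSpace ℂ E'] [CompleteSpace E']

/-!
Write `Qₙ = Aₙ* Aₙ` and `Rₙ = Aₙ Aₙ*` for the initial and final projections of the partial
isometries `Aₙ`. The orthogonality hypotheses say exactly that `Aₙ* Aₘ = 0` and `Aₙ Aₘ* = 0` for
`n ≠ m`, so both families consist of orthogonal idempotents, and they are complete because their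
ranges span `E`. Hence `V = Σ Aₙ` is unitary with `V Qₙ = Aₙ`, and `A(z) = V Σ zⁿ Qₙ`.
Operators of the form `Σ cₙ Qₙ` multiply coefficientwise. Since `z Pₘ + (I - Pₘ) = Σₙ z^[m < n] Qₙ`,
the product of these factors is `Σ zⁿ Qₙ`; on the circle `A(z)* A(z) = Σ |z|²ⁿ Qₙ = I`; and the
cofactor `B(z) = (Σ z^(N-n) Qₙ) V*` satisfies `A B = B A = z^N`.
-/

theorem Fin.prod_ite_castSucc_lt_eq_pow {M : Type*} [CommMonoid M] {N : ℕ} (n : Fin (N + 1))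
    (z : M) : ∏ m : Fin N, (if m.castSucc < n then z else 1) = z ^ (n : ℕ) := by
  simp only [Fin.lt_def, Fin.val_castSucc]
  rw [Fin.prod_univ_eq_prod_range (fun m => if m < n then z else 1)]
  simp_rw [← Finset.mem_range (n := n)]
  rw [Finset.prod_ite_mem, Finset.inter_eq_right.mpr (Finset.range_subset_range.mpr n.is_le),
    Finset.prod_const, Finset.card_range]

section Algebra

variable {A ι : Type*}

theorem Finset.sum_mul_sum_of_pairwise_mul_eq_zero [NonUnitalNonAssocSemiring A] [Fintype ι]
    {a b : ι → A} (h : Pairwise fun i j => a i * b j = 0) :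
    (∑ i, a i) * ∑ i, b i = ∑ i, a i * b i := by
  rw [Finset.sum_mul_sum]
  exact Finset.sum_congr rfl fun i _ =>
    Finset.sum_eq_single i (fun j _ hji => h hji.symm) (by simp)

section StarRing

variable [Ring A] [StarRing A] {c : ι → A}

theorem orthogonalIdempotents_star_mul_self (hc : ∀ i, c i * star (c i) * c i = c i)
    (horth : Pairwise fun i j => c i * star (c j) = 0) :
    OrthogonalIdempotents fun i => star (c i) * c i where
  idem i := by
    simp only [IsIdempotentElem, mul_assoc] at hc ⊢
    rw [hc]
  ortho i j hij := by
    simp only [mul_assoc]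
    rw [← mul_assoc (c i), horth hij, zero_mul, mul_zero]

theorem orthogonalIdempotents_mul_star_self (hc : ∀ i, c i * star (c i) * c i = c i)
    (horth : Pairwise fun i j => star (c i) * c j = 0) :
    OrthogonalIdempotents fun i => c i * star (c i) := by
  simpa using orthogonalIdempotents_star_mul_self (c := fun i => star (c i))
    (fun i => by simpa [mul_assoc] using congr_arg star (hc i)) (by simpa using horth)

theorem sum_mul_star_eq_mul_star [Fintype ι] (horth : Pairwise fun i j => c i * star (c j) = 0)
    (i : ι) : (∑ j, c j) * star (c i) = c i * star (c i) := by
  rw [Finset.sum_mul]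
  exact Finset.sum_eq_single i (fun j _ hji => horth hji) (by simp)

theorem sum_mul_star_mul_self [Fintype ι] (hc : ∀ i, c i * star (c i) * c i = c i)
    (horth : Pairwise fun i j => c i * star (c j) = 0) (i : ι) :
    (∑ j, c j) * (star (c i) * c i) = c i := by
  rw [← mul_assoc, sum_mul_star_eq_mul_star horth, hc]

theorem sum_mem_unitary [Fintype ι] (hfinal : Pairwise fun i j => star (c i) * c j = 0)
    (hinitial : Pairwise fun i j => c i * star (c j) = 0)
    (hQ : ∑ i, star (c i) * c i = 1) (hR : ∑ i, c i * star (c i) = 1) :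
    ∑ i, c i ∈ unitary A := by
  refine Unitary.mem_iff.mpr ⟨?_, ?_⟩
  · rw [star_sum, Finset.sum_mul_sum_of_pairwise_mul_eq_zero hfinal, hQ]
  · rw [star_sum, Finset.sum_mul_sum_of_pairwise_mul_eq_zero hinitial, hR]

end StarRing

section Idempotents

variable {K : Type*} [CommSemiring K] [Fintype ι] {e : ι → A}

theorem OrthogonalIdempotents.sum_smul_mul_sum_smul [Semiring A] [Algebra K A]
    (he : OrthogonalIdempotents e) (a b : ι → K) :
    (∑ i, a i • e i) * ∑ i, b i • e i = ∑ i, (a i * b i) • e i := by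
  rw [Finset.sum_mul_sum_of_pairwise_mul_eq_zero fun i j hij => by
    simp only [smul_mul_smul_comm, he.ortho hij, smul_zero]]
  simp only [smul_mul_smul_comm, (he.idem _).eq]

theorem CompleteOrthogonalIdempotents.prod_ofFn_sum_smul [Semiring A] [Algebra K A]
    (he : CompleteOrthogonalIdempotents e) {M : ℕ} (c : Fin M → ι → K) :
    (List.ofFn fun m => ∑ i, c m i • e i).prod = ∑ i, (∏ m, c m i) • e i := by
  induction M with
  | zero => simp [he.complete]
  | succ M ih =>
    rw [List.ofFn_succ, List.prod_cons, ih, he.sum_smul_mul_sum_smul]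
    simp only [Fin.prod_univ_succ]

theorem CompleteOrthogonalIdempotents.smul_sum_add_one_sub_sum [Ring A] [Algebra K A]
    [DecidableEq ι] (he : CompleteOrthogonalIdempotents e) (s : Finset ι) (z : K) :
    z • ∑ i ∈ s, e i + (1 - ∑ i ∈ s, e i) = ∑ i, (if i ∈ s then z else 1) • e i := by
  rw [← he.complete, ← Finset.sum_add_sum_compl s e,
    ← Finset.sum_add_sum_compl s fun i => (if i ∈ s then z else 1) • e i,
    Finset.smul_sum, add_sub_cancel_left]
  congr 1
  · exact Finset.sum_congr rfl fun i hi => by rw [if_pos hi]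
  · exact Finset.sum_congr rfl fun i hi => by rw [if_neg (Finset.mem_compl.mp hi), one_smul]


theorem CompleteOrthogonalIdempotents.prod_ofFn_smul_sum_add_one_sub_sum [Ring A] [Algebra K A]
    {N : ℕ} {e : Fin (N + 1) → A} (he : CompleteOrthogonalIdempotents e) (z : K) :
    (List.ofFn fun m : Fin N =>
        z • ∑ n with m.castSucc < n, e n + (1 - ∑ n with m.castSucc < n, e n)).prod =
      ∑ n : Fin (N + 1), z ^ (n : ℕ) • e n := by
  simp only [he.smul_sum_add_one_sub_sum, he.prod_ofFn_sum_smul, Finset.mem_filter_univ,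
    Fin.prod_ite_castSucc_lt_eq_pow]

end Idempotents

end Algebra

section RangeIdempotents

variable {R M ι : Type*} [Semiring R] [AddCommMonoid M] [Module R M] [TopologicalSpace M]

theorem ContinuousLinearMap.range_mul_eq_of_mul_mul_eq {a b : M →L[R] M} (h : a * b * a = a) :
    LinearMap.range ((a * b : M →L[R] M) : M →ₗ[R] M) = LinearMap.range (a : M →ₗ[R] M) := by
  refine le_antisymm ?_ ?_
  · rintro _ ⟨x, rfl⟩
    exact ⟨b x, rfl⟩
  · rintro _ ⟨x, rfl⟩
    exact ⟨a x, congr($h x)⟩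

theorem OrthogonalIdempotents.range_sum_eq_iSup [ContinuousAdd M] {e : ι → M →L[R] M}
    (he : OrthogonalIdempotents e) (s : Finset ι) :
    LinearMap.range ((∑ i ∈ s, e i : M →L[R] M) : M →ₗ[R] M) =
      ⨆ i ∈ s, LinearMap.range (e i : M →ₗ[R] M) := by
  classical
  refine le_antisymm ?_ (iSup₂_le fun i hi => ?_)
  · rintro _ ⟨x, rfl⟩
    rw [ContinuousLinearMap.coe_coe, sum_apply]
    exact Submodule.sum_mem _ fun i hi =>
      Submodule.mem_iSup_of_mem i <| Submodule.mem_iSup_of_mem hi <| LinearMap.mem_range_self _ x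
  · rintro _ ⟨x, rfl⟩
    have hfix : (∑ j ∈ s, e j) * e i = e i := by
      simp [Finset.sum_mul, he.mul_eq, hi]
    exact ⟨e i x, congr($hfix x)⟩

theorem OrthogonalIdempotents.completeOrthogonalIdempotents_of_iSup_range_eq_top [ContinuousAdd M]
    [Fintype ι] {e : ι → M →L[R] M} (he : OrthogonalIdempotents e)
    (htop : ⨆ i, LinearMap.range (e i : M →ₗ[R] M) = ⊤) : CompleteOrthogonalIdempotents e := by
  refine ⟨he, ?_⟩
  have hrange : LinearMap.range ((∑ i, e i : M →L[R] M) : M →ₗ[R] M) = ⊤ := by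
    rw [he.range_sum_eq_iSup]
    simpa using htop
  ext x
  obtain ⟨y, rfl⟩ := LinearMap.range_eq_top.mp hrange x
  exact congr($he.isIdempotentElem_sum.eq y)

end RangeIdempotents

theorem ContinuousLinearMap.adjoint_comp_eq_zero_of_range_le_orthogonal {F : Type*}
    [NormedAddCommGroup F] [NormedSpace ℂ F] {T : D →L[ℂ] E} {S : F →L[ℂ] E}
    (h : LinearMap.range (S : F →ₗ[ℂ] E) ≤ (LinearMap.range (T : D →ₗ[ℂ] E))ᗮ) :
    adjoint T ∘L S = 0 := by
  rw [orthogonal_range] at h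
  ext x
  exact h ⟨x, rfl⟩

open ContinuousLinearMap

theorem measurable_exp_ofReal_mul_I : Measurable fun t : ℝ => exp (t * I) := by
  fun_prop

theorem ae_norm_eq_one_mT : ∀ᵐ z ∂mT, ‖z‖ = 1 := by
  rw [mT, ae_map_iff measurable_exp_ofReal_mul_I.aemeasurable
    (isClosed_eq continuous_norm continuous_const).measurableSet]
  exact ae_of_all _ fun t => norm_exp_ofReal_mul_I t

instance : IsProbabilityMeasure mT := by
  constructor
  rw [mT, Measure.map_apply measurable_exp_ofReal_mul_I MeasurableSet.univ]
  simp only [Set.preimage_univ, Measure.smul_apply, Measure.restrict_apply MeasurableSet.univ,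
    Set.univ_inter, Real.volume_Ioc, sub_zero, smul_eq_mul]
  exact ENNReal.inv_mul_cancel (by simp [Real.pi_pos]) ENNReal.ofReal_ne_top

theorem integral_pow_mT_eq_zero {k : ℕ} (hk : k ≠ 0) : ∫ z, z ^ k ∂mT = 0 := by
  have hexp : ∀ t : ℝ, exp (t * I) ^ k = exp ((k * I) * t) := fun t => by
    rw [← exp_nat_mul]; ring_nf
  have hperiod : exp (k * I * (2 * Real.pi)) = 1 := by
    rw [← exp_int_mul_two_pi_mul_I k]; push_cast; ring_nf
  rw [mT, integral_map measurable_exp_ofReal_mul_I.aemeasurable (by fun_prop),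
    integral_smul_measure]
  simp only [hexp]
  rw [← intervalIntegral.integral_of_le (by positivity),
    integral_exp_mul_complex (by simp [hk, I_ne_zero])]
  simp [hperiod]

theorem memHinf_sum_pow_smul {ι F : Type*} [Fintype ι] [NormedAddCommGroup F]
    [InnerProductSpace ℂ F] (T : ι → F →L[ℂ] E) (e : ι → ℕ) :
    MemHinf fun z => ∑ i, z ^ e i • T i where
  meas x := by
    simp only [sum_apply, smul_apply]
    exact (continuous_finsetSum _ fun i _ => by fun_prop).aestronglyMeasurable
  bdd := ⟨∑ i, ‖T i‖, by
    filter_upwards [ae_norm_eq_one_mT] with z hz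
    refine (norm_sum_le _ _).trans_eq (Finset.sum_congr rfl fun i _ => ?_)
    rw [norm_smul, norm_pow, hz, one_pow, one_mul]⟩
  neg n hn x := by
    obtain ⟨k, hk, rfl⟩ : ∃ k : ℕ, k ≠ 0 ∧ n = -k := ⟨(-n).toNat, by omega, by omega⟩
    -- on the circle `z̄ = z⁻¹`, so the coefficient is a combination of `∫ z ^ (k + e i) = 0`
    have hae : ∀ᵐ z ∂mT, (starRingEnd ℂ z) ^ (-k : ℤ) • (∑ i, z ^ e i • T i) x =
        ∑ i, (z ^ (k + e i)) • T i x := by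
      filter_upwards [ae_norm_eq_one_mT] with z hz
      simp only [← inv_eq_conj hz, inv_zpow', neg_neg, zpow_natCast, sum_apply, smul_apply,
        Finset.smul_sum, smul_smul, pow_add]
    have hint : ∀ i, Integrable (fun z : ℂ => z ^ (k + e i) • T i x) mT := fun i =>
      (integrable_const ‖T i x‖).mono' (by fun_prop) <| by
        filter_upwards [ae_norm_eq_one_mT] with z hz
        rw [norm_smul, norm_pow, hz, one_pow, one_mul]
    rw [fc, integral_congr_ae hae, integral_finsetSum _ fun i _ => hint i]
    exact Finset.sum_eq_zero fun i _ => by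
      rw [integral_smul_const, integral_pow_mT_eq_zero (by omega), zero_smul]

theorem isInnerDiv_mul_sum_pow_smul {N : ℕ} {V : E →L[ℂ] E} (hV : V ∈ unitary (E →L[ℂ] E))
    {Q : Fin (N + 1) → E →L[ℂ] E} (hQ : CompleteOrthogonalIdempotents Q)
    (hQself : ∀ n, IsSelfAdjoint (Q n)) :
    IsInnerDiv (fun z => V * ∑ n : Fin (N + 1), z ^ (n : ℕ) • Q n)
      (fun z => z ^ N • (1 : E →L[ℂ] E)) := by
  have hmem : MemHinf fun z => V * ∑ n : Fin (N + 1), z ^ (n : ℕ) • Q n := by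
    simpa only [Finset.mul_sum, mul_smul_comm] using
      memHinf_sum_pow_smul (fun n => V * Q n) fun n : Fin (N + 1) => (n : ℕ)
  have hinner : IsInnerFn fun z => V * ∑ n : Fin (N + 1), z ^ (n : ℕ) • Q n := by
    refine ⟨hmem, ?_⟩
    filter_upwards [ae_norm_eq_one_mT] with z hz
    have hzz : starRingEnd ℂ z * z = 1 := by
      rw [← normSq_eq_conj_mul_self, normSq_eq_norm_sq, hz, one_pow, ofReal_one]
    change star (V * _) * (V * _) = 1
    rw [star_mul, mul_assoc, ← mul_assoc (star V), Unitary.star_mul_self_of_mem hV, one_mul,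
      star_sum]
    simp only [star_smul, (hQself _).star_eq, star_pow, RCLike.star_def]
    simp only [hQ.sum_smul_mul_sum_smul, ← mul_pow, hzz, one_pow, one_smul, hQ.complete]
  set B := fun z : ℂ => (∑ n : Fin (N + 1), z ^ (N - n : ℕ) • Q n) * star V
  have hB : MemHinf B := by
    simpa only [B, Finset.sum_mul, smul_mul_assoc] using
      memHinf_sum_pow_smul (fun n => Q n * star V) fun n : Fin (N + 1) => N - n
  have hdiag : ∀ z : ℂ, ∑ n : Fin (N + 1), (z ^ (n : ℕ) * z ^ (N - n : ℕ)) • Q n = z ^ N • 1 :=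
    fun z => by
      simp only [← pow_add, ← Finset.smul_sum, hQ.complete,
        fun n : Fin (N + 1) => Nat.add_sub_cancel' n.is_le]
  refine ⟨⟨hinner, B, hB, ae_of_all _ fun z => ?_⟩, ⟨hinner, B, hB, ae_of_all _ fun z => ?_⟩⟩
  · change _ = V * _ * (_ * star V)
    rw [mul_assoc, ← mul_assoc _ _ (star V), hQ.sum_smul_mul_sum_smul, hdiag, smul_one_mul,
      mul_smul_comm, Unitary.mul_star_self_of_mem hV]
  · change z ^ N • 1 = _ * star V * (V * _)
    rw [mul_assoc, ← mul_assoc (star V), Unitary.star_mul_self_of_mem hV, one_mul,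
      hQ.sum_smul_mul_sum_smul, ← hdiag]
    exact Finset.sum_congr rfl fun n _ => by rw [mul_comm]

/-- Let `A(z) = Σ_{n=0}^{N} Aₙ zⁿ` be an operator-valued polynomial whose
coefficients `Aₙ` and `Aₙ*` are partial isometries with
`E = ⊕ₙ ran Aₙ = ⊕ₙ ran Aₙ*`. Then `A(z) = V ∏_{m=1}^{N}(z Pₘ + (I - Pₘ))` where `Pₘ` is
the orthogonal projection onto `⊕_{n=m}^{N} ran Aₙ*` and `V` is the constant unitary acting
as `Aₙ` on `ran Aₙ*`; in particular `A` is a finite Blaschke-Potapov product and an inner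
divisor of `z^N I_E`. -/
theorem polynomial_with_partialIsometry_coeffs_is_BPProduct (N : ℕ)
    (C : Fin (N + 1) → E →L[ℂ] E)
    (hpi : ∀ n, IsPartialIsom (C n) ∧ IsPartialIsom (ContinuousLinearMap.adjoint (C n)))
    (horth : ∀ i j, i ≠ j → LinearMap.range (C i : E →ₗ[ℂ] E) ≤ (LinearMap.range (C j : E →ₗ[ℂ] E))ᗮ)
    (hsup : (⨆ n, LinearMap.range (C n : E →ₗ[ℂ] E)) = ⊤)
    (horth' : ∀ i j, i ≠ j →
      LinearMap.range (ContinuousLinearMap.adjoint (C i) : E →ₗ[ℂ] E) ≤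
        (LinearMap.range (ContinuousLinearMap.adjoint (C j) : E →ₗ[ℂ] E))ᗮ)
    (hsup' : (⨆ n, LinearMap.range (ContinuousLinearMap.adjoint (C n) : E →ₗ[ℂ] E)) = ⊤) :
    ∃ (V : E →L[ℂ] E) (P : Fin N → E →L[ℂ] E),
      IsUnitaryOp V ∧
      (∀ n : Fin (N + 1), ∀ y ∈ LinearMap.range (ContinuousLinearMap.adjoint (C n) : E →ₗ[ℂ] E),
        V y = C n y) ∧
      (∀ m : Fin N, IsOrthoProj (P m) ∧
        LinearMap.range (P m : E →ₗ[ℂ] E) =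
          ⨆ (n : Fin (N + 1)) (_ : (m : ℕ) + 1 ≤ (n : ℕ)),
            LinearMap.range (ContinuousLinearMap.adjoint (C n) : E →ₗ[ℂ] E)) ∧
      (∀ z : ℂ, (∑ n : Fin (N + 1), z ^ (n : ℕ) • C n) =
        V * (List.ofFn fun m : Fin N => z • P m + (1 - P m)).prod) ∧
      IsInnerDiv (fun z => ∑ n : Fin (N + 1), z ^ (n : ℕ) • C n)
        (fun z => z ^ N • (1 : E →L[ℂ] E)) := by
  have hc : ∀ n, C n * star (C n) * C n = C n := fun n => (hpi n).1
  have hc' : ∀ n, star (C n) * C n * star (C n) = star (C n) := fun n => by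
    have h := (hpi n).2
    rwa [IsPartialIsom, adjoint_adjoint] at h
  have hfinal : Pairwise fun i j => star (C i) * C j = 0 := fun i j hij =>
    adjoint_comp_eq_zero_of_range_le_orthogonal (horth j i hij.symm)
  have hinitial : Pairwise fun i j => C i * star (C j) = 0 := fun i j hij => by
    have h := adjoint_comp_eq_zero_of_range_le_orthogonal (horth' j i hij.symm)
    rwa [adjoint_adjoint] at h
  have hrange : ∀ n, LinearMap.range ((star (C n) * C n : E →L[ℂ] E) : E →ₗ[ℂ] E) =
      LinearMap.range (adjoint (C n) : E →ₗ[ℂ] E) := fun n => range_mul_eq_of_mul_mul_eq (hc' n)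
  have hQ : CompleteOrthogonalIdempotents fun n => star (C n) * C n :=
    (orthogonalIdempotents_star_mul_self hc hinitial
      ).completeOrthogonalIdempotents_of_iSup_range_eq_top (by simpa only [hrange] using hsup')
  have hR : CompleteOrthogonalIdempotents fun n => C n * star (C n) :=
    (orthogonalIdempotents_mul_star_self hc hfinal
      ).completeOrthogonalIdempotents_of_iSup_range_eq_top
      (by simpa only [range_mul_eq_of_mul_mul_eq (hc _)] using hsup)
  have hV := sum_mem_unitary hfinal hinitial hQ.complete hR.complete
  have hfactor : (fun z : ℂ => ∑ n : Fin (N + 1), z ^ (n : ℕ) • C n) =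
      fun z => (∑ n, C n) * ∑ n : Fin (N + 1), z ^ (n : ℕ) • (star (C n) * C n) :=
    funext fun z => by simp only [Finset.mul_sum, mul_smul_comm, sum_mul_star_mul_self hc hinitial]
  refine ⟨∑ n, C n, fun m => ∑ n with m.castSucc < n, star (C n) * C n, hV, ?_,
    fun m => ⟨?_, ?_⟩,
    fun z => by rw [congrFun hfactor z, hQ.prod_ofFn_smul_sum_add_one_sub_sum], ?_⟩
  · rintro n _ ⟨x, rfl⟩
    exact congr($(sum_mul_star_eq_mul_star hinitial n) x)
  · exact ⟨hQ.isIdempotentElem_sum, isSelfAdjoint_sum _ fun n _ => .star_mul_self (C n)⟩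
  · rw [hQ.range_sum_eq_iSup]
    simp only [Finset.mem_filter_univ, hrange]
    -- `m.castSucc < n` unfolds to `(m : ℕ) + 1 ≤ n`
    rfl
  · rw [hfactor]
    exact isInnerDiv_mul_sum_pow_smul hV hQ fun n => .star_mul_self (C n)

end
end
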